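/- arXiv:2602.01987 — 2 statements merged into one kernel-verified Lean document; each statement's English description precedes it below -/
import Mathlib

section
/- Let n, r ≥ 1 and let f : Fin n → Fin r be a surjective function. Let B_f ⊆ Matrix (Fin n) (Fin n) ℂ be the unital subalgebra of all matrices Matrix.diagonal (c ∘ f), c : Fin r → ℂ (realizing the inclusion ℂ^r ⊆ M_n(ℂ) with inclusion matrix entries a_j = |f⁻¹({j})|). Then the inclusion B_f ⊆ M_n(ℂ) is regular if and only if the inclusion matrix satisfies the spectral condition, i.e., there exists d : ℕ such that |f⁻¹({j})| · n = d for every j : Fin r (equivalently, all fibers of f have the same cardinality). -/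
open Matrix

/-- The subalgebra `ℂ^r ⊆ M_n(ℂ)` determined by `f : Fin n → Fin r`. -/
def Bf (n r : ℕ) (f : Fin n → Fin r) : Set (Matrix (Fin n) (Fin n) ℂ) :=
  {M | ∃ c : Fin r → ℂ, M = Matrix.diagonal (c ∘ f)}

/-- The normalizer of a subset `B` of `M_n(ℂ)`. -/
def matrixNormalizer (n : ℕ) (B : Set (Matrix (Fin n) (Fin n) ℂ)) :
    Set (Matrix (Fin n) (Fin n) ℂ) :=
  {U | U ∈ unitary (Matrix (Fin n) (Fin n) ℂ) ∧ (fun M => U * M * Uᴴ) '' B = B}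

/-!
Conjugation by a unitary `U` normalizing `B_f` carries the projection `p` onto the fibre of `f y`
to a projection of `B_f` of the same trace. If `U x y ≠ 0`, the relation `(U p Uᴴ) U = U p` at
the entry `(x, y)` shows that this projection is `1` on the whole fibre of `f x`, so that fibre
is no larger than the fibre of `f y`; applied to `Uᴴ` as well, the two fibres have equal size.
A spanning normalizer has elements with any prescribed nonzero entry, which gives one direction.
Conversely, if all fibres have equal size, then for all `x, y` some permutation `π` with
`π x = y` permutes the fibres, and the matrix unit `E_xy` is the average of the permutation
matrix of `π` and its product with the sign diagonal `diag(1 at x, -1 elsewhere)`, both of which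
normalize `B_f`.
-/

open Finset Equiv

section General

variable {ι R : Type*} [Fintype ι] [DecidableEq ι]

theorem Matrix.permMatrix_mem_unitary [CommRing R] [StarRing R] (π : Perm ι) :
    π.permMatrix R ∈ unitary (Matrix ι ι R) := by
  rw [← unitaryGroup, mem_unitaryGroup_iff, star_eq_conjTranspose, conjTranspose_permMatrix,
    ← permMatrix_mul, inv_mul_cancel, permMatrix_one]

theorem Matrix.permMatrix_mul_diagonal_mul_conjTranspose [Semiring R] [StarRing R]
    (π : Perm ι) (d : ι → R) :
    π.permMatrix R * diagonal d * (π.permMatrix R)ᴴ = diagonal (d ∘ π) := by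
  rw [conjTranspose_permMatrix, PEquiv.toMatrix_toPEquiv_mul, PEquiv.mul_toMatrix_toPEquiv,
    submatrix_submatrix, Perm.inv_def, symm_symm]
  exact submatrix_diagonal_equiv d π

theorem Matrix.diagonal_mem_unitary [CommRing R] [StarRing R] {v : ι → R}
    (hv : ∀ i, star (v i) * v i = 1) : diagonal v ∈ unitary (Matrix ι ι R) := by
  rw [← unitaryGroup, mem_unitaryGroup_iff', star_eq_conjTranspose, diagonal_conjTranspose,
    diagonal_mul_diagonal, ← diagonal_one]
  exact congrArg diagonal (funext hv)

theorem IsIdempotentElem.mul_mul_of_mul_eq_one {M : Type*} [Monoid M] {p u v : M}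
    (hp : IsIdempotentElem p) (h : v * u = 1) : IsIdempotentElem (u * p * v) := by
  rw [IsIdempotentElem, mul_assoc, ← mul_assoc v, ← mul_assoc v, h, one_mul, ← mul_assoc,
    mul_assoc u p p, hp.eq]

theorem Matrix.isIdempotentElem_diagonal_iff [Semiring R] {d : ι → R} :
    IsIdempotentElem (diagonal d) ↔ ∀ i, IsIdempotentElem (d i) := by
  rw [IsIdempotentElem, diagonal_mul_diagonal, diagonal_injective.eq_iff, funext_iff]
  rfl

theorem Matrix.trace_diagonal_of_isIdempotentElem [Semiring R] [IsLeftCancelMulZero R]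
    [DecidableEq R] {d : ι → R} (hd : ∀ i, IsIdempotentElem (d i)) :
    trace (diagonal d) = #{i | d i = 1} := by
  rw [trace_diagonal, ← sum_boole]
  refine sum_congr rfl fun i _ => ?_
  rcases IsIdempotentElem.iff_eq_zero_or_one.1 (hd i) with h | h <;> simp [h]

theorem Equiv.exists_perm_semiconj_apply_eq {α β : Type*} [Fintype α] [DecidableEq α]
    [DecidableEq β] {f : α → β} (hf : ∀ j j', #{a | f a = j} = #{a | f a = j'}) (x y : α) :
    ∃ π : Perm α, ∃ σ : Perm β, (∀ a, f (π a) = σ (f a)) ∧ π x = y := by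
  set σ := swap (f x) (f y)
  have e : ∀ j, {a // f a = j} ≃ {a // σ.symm (f a) = j} := fun j =>
    Fintype.equivOfCardEq <| by
      simp_rw [Fintype.card_subtype, σ.symm_apply_eq]
      exact hf _ _
  set π₀ := ofFiberEquiv e
  have hπ₀ : ∀ a, f (π₀ a) = σ (f a) := fun a => σ.symm_apply_eq.1 (ofFiberEquiv_map e a)
  have hx : f (π₀ x) = f y := by rw [hπ₀, swap_apply_left]
  refine ⟨π₀.trans (swap (π₀ x) y), σ, fun a => ?_, swap_apply_left _ _⟩
  rw [trans_apply, apply_swap_eq_self hx, hπ₀]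

end General

theorem Matrix.exists_mem_apply_ne_zero_of_span_eq_top {m n R : Type*} [DecidableEq m]
    [DecidableEq n] [Semiring R] [Nontrivial R] {S : Set (Matrix m n R)}
    (hS : Submodule.span R S = ⊤) (i : m) (j : n) :
    ∃ U ∈ S, U i j ≠ 0 := by
  by_contra! h
  have : ∀ M ∈ Submodule.span R S, M i j = 0 := fun M hM =>
    Submodule.span_induction h (by simp) (fun _ _ _ _ hM hN => by simp [hM, hN])
      (fun _ _ _ hM => by simp [hM]) hM
  simpa using this (Matrix.single i j 1) (hS ▸ Submodule.mem_top)

section Normalizer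

variable {n r : ℕ} {B : Set (Matrix (Fin n) (Fin n) ℂ)} {U V : Matrix (Fin n) (Fin n) ℂ}

theorem conj_mem_of_mem_matrixNormalizer (hU : U ∈ matrixNormalizer n B) {M} (hM : M ∈ B) :
    U * M * Uᴴ ∈ B :=
  hU.2 ▸ Set.mem_image_of_mem _ hM

theorem mem_matrixNormalizer_of_conj_mem (hU : U ∈ unitary (Matrix (Fin n) (Fin n) ℂ))
    (h₁ : ∀ M ∈ B, U * M * Uᴴ ∈ B) (h₂ : ∀ M ∈ B, Uᴴ * M * U ∈ B) :
    U ∈ matrixNormalizer n B := by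
  refine ⟨hU, (Set.image_subset_iff.2 h₁).antisymm fun M hM => ⟨Uᴴ * M * U, h₂ M hM, ?_⟩⟩
  have h : U * Uᴴ = 1 := Unitary.mul_star_self_of_mem hU
  change U * (Uᴴ * M * U) * Uᴴ = M
  rw [← mul_assoc, ← mul_assoc, h, one_mul, mul_assoc, h, mul_one]

theorem conjTranspose_mem_matrixNormalizer (hU : U ∈ matrixNormalizer n B) :
    Uᴴ ∈ matrixNormalizer n B := by
  have h : Uᴴ * U = 1 := Unitary.star_mul_self_of_mem hU.1
  refine mem_matrixNormalizer_of_conj_mem (Unitary.star_mem hU.1) (fun M hM => ?_) fun M hM => ?_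
  · obtain ⟨N, hN, rfl⟩ : M ∈ (fun M => U * M * Uᴴ) '' B := hU.2.symm ▸ hM
    rwa [conjTranspose_conjTranspose, ← mul_assoc, ← mul_assoc, h, one_mul, mul_assoc, h,
      mul_one]
  · rw [conjTranspose_conjTranspose]
    exact conj_mem_of_mem_matrixNormalizer hU hM

theorem mul_mem_matrixNormalizer (hU : U ∈ matrixNormalizer n B)
    (hV : V ∈ matrixNormalizer n B) : U * V ∈ matrixNormalizer n B := by
  refine mem_matrixNormalizer_of_conj_mem (mul_mem hU.1 hV.1) (fun M hM => ?_) fun M hM => ?_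
  · simpa only [conjTranspose_mul, mul_assoc] using
      conj_mem_of_mem_matrixNormalizer hU (conj_mem_of_mem_matrixNormalizer hV hM)
  · simpa only [conjTranspose_mul, conjTranspose_conjTranspose, mul_assoc] using
      conj_mem_of_mem_matrixNormalizer (conjTranspose_mem_matrixNormalizer hV)
        (conj_mem_of_mem_matrixNormalizer (conjTranspose_mem_matrixNormalizer hU) hM)

theorem mem_matrixNormalizer_of_commute (hU : U ∈ unitary (Matrix (Fin n) (Fin n) ℂ))
    (hB : ∀ M ∈ B, Commute U M) : U ∈ matrixNormalizer n B := by
  have h₁ : U * Uᴴ = 1 := Unitary.mul_star_self_of_mem hU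
  have h₂ : Uᴴ * U = 1 := Unitary.star_mul_self_of_mem hU
  refine mem_matrixNormalizer_of_conj_mem hU (fun M hM => ?_) fun M hM => ?_
  · rwa [(hB M hM).eq, mul_assoc, h₁, mul_one]
  · rwa [mul_assoc, ← (hB M hM).eq, ← mul_assoc, h₂, one_mul]

end Normalizer

section Bf

variable {n r : ℕ} {f : Fin n → Fin r}

theorem permMatrix_conj_mem_Bf {π : Perm (Fin n)} {σ : Perm (Fin r)}
    (h : ∀ z, f (π z) = σ (f z)) {M : Matrix (Fin n) (Fin n) ℂ} (hM : M ∈ Bf n r f) :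
    π.permMatrix ℂ * M * (π.permMatrix ℂ)ᴴ ∈ Bf n r f := by
  obtain ⟨c, rfl⟩ := hM
  refine ⟨c ∘ σ, ?_⟩
  rw [permMatrix_mul_diagonal_mul_conjTranspose]
  exact congrArg diagonal (funext fun z => congrArg c (h z))

theorem permMatrix_mem_matrixNormalizer {π : Perm (Fin n)} {σ : Perm (Fin r)}
    (h : ∀ z, f (π z) = σ (f z)) : π.permMatrix ℂ ∈ matrixNormalizer n (Bf n r f) := by
  have h' : ∀ z, f (π⁻¹ z) = σ⁻¹ (f z) := fun z => by
    rw [Perm.eq_inv_iff_eq, ← h]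
    exact congrArg f (π.apply_symm_apply z)
  refine mem_matrixNormalizer_of_conj_mem (permMatrix_mem_unitary π)
    (fun M => permMatrix_conj_mem_Bf h) fun M hM => ?_
  simpa only [conjTranspose_permMatrix, inv_inv] using permMatrix_conj_mem_Bf h' hM

theorem diagonal_mem_matrixNormalizer {v : Fin n → ℂ} (hv : ∀ z, star (v z) * v z = 1) :
    diagonal v ∈ matrixNormalizer n (Bf n r f) := by
  refine mem_matrixNormalizer_of_commute (diagonal_mem_unitary hv) ?_
  rintro _ ⟨c, rfl⟩
  exact commute_diagonal v (c ∘ f)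

theorem single_mem_span_matrixNormalizer (hf : ∀ j j', #{z | f z = j} = #{z | f z = j'})
    (x y : Fin n) : single x y (1 : ℂ) ∈ Submodule.span ℂ (matrixNormalizer n (Bf n r f)) := by
  obtain ⟨π, σ, hπσ, hπx⟩ := exists_perm_semiconj_apply_eq hf x y
  set P := π.permMatrix ℂ
  set D : Matrix (Fin n) (Fin n) ℂ := diagonal fun z => if z = x then 1 else -1
  have hP : P ∈ matrixNormalizer n (Bf n r f) := permMatrix_mem_matrixNormalizer hπσ
  have hD : D ∈ matrixNormalizer n (Bf n r f) :=
    diagonal_mem_matrixNormalizer fun z => by split_ifs <;> simp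
  have hsingle : single x y 1 = (2 : ℂ)⁻¹ • (P + D * P) := by
    ext i j
    have hPij : P i j = if π i = j then 1 else 0 := by simp [P]
    rw [Matrix.smul_apply, Matrix.add_apply, diagonal_mul, hPij, single_apply, smul_eq_mul]
    rcases eq_or_ne i x with rfl | hi
    · simp only [true_and, if_true, hπx]
      split_ifs <;> norm_num
    · simp only [hi.symm, hi, false_and, if_false]
      split_ifs <;> norm_num
  rw [hsingle]
  exact Submodule.smul_mem _ _ (Submodule.add_mem _ (Submodule.subset_span hP)
    (Submodule.subset_span (mul_mem_matrixNormalizer hD hP)))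

theorem span_matrixNormalizer_eq_top (hf : ∀ j j', #{z | f z = j} = #{z | f z = j'}) :
    Submodule.span ℂ (matrixNormalizer n (Bf n r f)) = ⊤ := by
  rw [eq_top_iff, ← (stdBasis ℂ (Fin n) (Fin n)).span_eq, Submodule.span_le]
  rintro _ ⟨⟨x, y⟩, rfl⟩
  rw [stdBasis_eq_single]
  exact single_mem_span_matrixNormalizer hf x y

theorem card_fiber_le_of_apply_ne_zero {U : Matrix (Fin n) (Fin n) ℂ}
    (hU : U ∈ matrixNormalizer n (Bf n r f)) {x y : Fin n} (hxy : U x y ≠ 0) :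
    #{z | f z = f x} ≤ #{z | f z = f y} := by
  have h₁ : Uᴴ * U = 1 := Unitary.star_mul_self_of_mem hU.1
  set e : Fin r → ℂ := fun j => if j = f y then 1 else 0
  set p := diagonal (e ∘ f)
  have hp : IsIdempotentElem p := isIdempotentElem_diagonal_iff.2 fun z => by
    by_cases hz : f z = f y <;> simp [e, hz, IsIdempotentElem]
  obtain ⟨c, hc⟩ : U * p * Uᴴ ∈ Bf n r f := conj_mem_of_mem_matrixNormalizer hU ⟨e, rfl⟩
  have hc_idem : ∀ z, IsIdempotentElem ((c ∘ f) z) :=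
    isIdempotentElem_diagonal_iff.1 (hc ▸ hp.mul_mul_of_mul_eq_one h₁)
  have hcx : c (f x) = 1 := by
    have hcU : diagonal (c ∘ f) * U = U * p := by rw [← hc, mul_assoc, h₁, mul_one]
    have := congrFun₂ hcU x y
    rw [diagonal_mul, mul_diagonal] at this
    simpa [e, hxy] using this
  have hcard : #{z | (c ∘ f) z = 1} = #{z | f z = f y} := by
    rw [← Nat.cast_inj (R := ℂ), ← trace_diagonal_of_isIdempotentElem hc_idem, ← hc,
      trace_mul_cycle, h₁, one_mul, trace_diagonal, ← sum_boole]
    simp [e]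
  rw [← hcard]
  exact card_le_card (monotone_filter_right _ fun z _ (hz : f z = f x) => by simp [hz, hcx])

theorem card_fiber_eq_of_apply_ne_zero {U : Matrix (Fin n) (Fin n) ℂ}
    (hU : U ∈ matrixNormalizer n (Bf n r f)) {x y : Fin n} (hxy : U x y ≠ 0) :
    #{z | f z = f x} = #{z | f z = f y} :=
  (card_fiber_le_of_apply_ne_zero hU hxy).antisymm <|
    card_fiber_le_of_apply_ne_zero (conjTranspose_mem_matrixNormalizer hU) <| by
      simpa [conjTranspose_apply] using hxy

theorem card_fiber_eq_of_span_matrixNormalizer_eq_top (hf : Function.Surjective f)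
    (h : Submodule.span ℂ (matrixNormalizer n (Bf n r f)) = ⊤) (j j' : Fin r) :
    #{z | f z = j} = #{z | f z = j'} := by
  obtain ⟨x, rfl⟩ := hf j
  obtain ⟨y, rfl⟩ := hf j'
  obtain ⟨U, hU, hxy⟩ := exists_mem_apply_ne_zero_of_span_eq_top h x y
  exact card_fiber_eq_of_apply_ne_zero hU hxy

end Bf

/-- the inclusion `ℂ^r ⊆ M_n(ℂ)` is regular if and only if its
inclusion matrix satisfies the spectral condition `a_j · n = d` for all `j`. -/
theorem regular_iff_spectral_condition (n r : ℕ) (hn : 1 ≤ n) (hr : 1 ≤ r)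
    (f : Fin n → Fin r) (hf : Function.Surjective f) :
    Submodule.span ℂ (matrixNormalizer n (Bf n r f)) = ⊤ ↔
    ∃ d : ℕ, ∀ j : Fin r,
      (Finset.univ.filter fun x => f x = j).card * n = d := by
  constructor
  · intro h
    exact ⟨#{z | f z = ⟨0, hr⟩} * n, fun j => by
      rw [card_fiber_eq_of_span_matrixNormalizer_eq_top hf h j ⟨0, hr⟩]⟩
  · rintro ⟨d, hd⟩
    exact span_matrixNormalizer_eq_top fun j j' =>
      Nat.eq_of_mul_eq_mul_right hn ((hd j).trans (hd j').symm)
end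

section
/- Let m, r, t ≥ 1 and consider the full matrix algebra M := Matrix (Fin r × Fin m × Fin t) (Fin r × Fin m × Fin t) ℂ (a copy of M_{mrt}(ℂ)). Let B ⊆ M be the set of all matrices Z for which there exists X : Fin r → Matrix (Fin m) (Fin m) ℂ such that Z (j,a,u) (k,b,v) = (if j = k ∧ u = v then X j a b else 0); i.e., B is a copy of the homogeneous algebra ⊕_{j<r} M_m(ℂ) embedded in M_{mrt}(ℂ) with all multiplicities equal to t. Then B is a unital star-subalgebra of M and the inclusion B ⊆ M is regular: the ℂ-linear span of {U ∈ M : U unitary, U B Uᴴ = B} equals M. -/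
/-!
The normalizer of `B` contains the unitaries of `B` (e.g. diagonal sign matrices depending only on
the block and in-block indices), the unitaries commuting with `B` (diagonal sign matrices depending
only on the multiplicity index) and the permutation matrices of product permutations. Being a
monoid, the normalizer spans the algebra it generates. Products of the projections `(1 - S) / 2`
attached to those sign matrices give every diagonal matrix unit `E_pp`, and `E_pq = E_pp P E_qq`
for a product permutation matrix `P` sending `q` to `p`, so this algebra is everything.
-/

open Matrix

section Normalizer

variable {A : Type*} [Monoid A] [StarMul A]

def unitaryNormalizer (B : Set A) : Submonoid A where
  carrier := {u | u ∈ unitary A ∧ (fun z => u * z * star u) '' B = B}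
  one_mem' := ⟨one_mem _, by simp⟩
  mul_mem' := by
    rintro u v ⟨hu, huB⟩ ⟨hv, hvB⟩
    refine ⟨mul_mem hu hv, ?_⟩
    have : (fun z => u * v * z * star (u * v)) =
        (fun z => u * z * star u) ∘ (fun z => v * z * star v) := by
      funext z
      simp [star_mul, mul_assoc]
    rw [this, Set.image_comp, hvB, huB]

theorem mem_unitaryNormalizer_of_conj_mem {B : Set A} {u : A} (hu : u ∈ unitary A)
    (h : ∀ z ∈ B, u * z * star u ∈ B) (h' : ∀ z ∈ B, star u * z * u ∈ B) :
    u ∈ unitaryNormalizer B := by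
  refine ⟨hu, (Set.image_subset_iff.2 h).antisymm fun z hz => ⟨star u * z * u, h' z hz, ?_⟩⟩
  simp only [← mul_assoc, Unitary.mul_star_self_of_mem hu, one_mul]
  simp only [mul_assoc, Unitary.mul_star_self_of_mem hu, mul_one]

theorem mem_unitaryNormalizer_of_commute {B : Set A} {u : A} (hu : u ∈ unitary A)
    (h : ∀ z ∈ B, Commute u z) : u ∈ unitaryNormalizer B := by
  refine mem_unitaryNormalizer_of_conj_mem hu (fun z hz => ?_) (fun z hz => ?_)
  · rwa [(h z hz).eq, mul_assoc, Unitary.mul_star_self_of_mem hu, mul_one]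
  · rwa [mul_assoc, ← (h z hz).eq, ← mul_assoc, Unitary.star_mul_self_of_mem hu, one_mul]

theorem StarSubalgebra.mem_unitaryNormalizer_of_mem {R : Type*} [CommSemiring R] [StarRing R]
    {A : Type*} [Semiring A] [StarRing A] [Algebra R A] [StarModule R A]
    {S : StarSubalgebra R A} {u : A} (hu : u ∈ unitary A) (huS : u ∈ S) :
    u ∈ unitaryNormalizer (S : Set A) :=
  mem_unitaryNormalizer_of_conj_mem hu
    (fun _ hz => mul_mem (mul_mem huS hz) (star_mem huS))
    (fun _ hz => mul_mem (mul_mem (star_mem huS) hz) huS)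

end Normalizer

theorem Submonoid.span_eq_toSubmodule_adjoin (R : Type*) {A : Type*} [CommSemiring R] [Semiring A]
    [Algebra R A] (M : Submonoid A) :
    Submodule.span R (M : Set A) = Subalgebra.toSubmodule (Algebra.adjoin R (M : Set A)) := by
  rw [Algebra.adjoin_eq_span, Submonoid.closure_eq]

namespace Matrix

variable {n R : Type*} [Fintype n] [DecidableEq n]

theorem subalgebra_eq_top_of_single_mem [CommSemiring R] {S : Subalgebra R (Matrix n n R)}
    (hdiag : ∀ i, single i i 1 ∈ S) (hlink : ∀ i j, ∃ M ∈ S, M i j = 1) : S = ⊤ := by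
  refine eq_top_iff.2 fun M _ => M.induction_on' S.zero_mem (fun _ _ => S.add_mem) fun i j c => ?_
  obtain ⟨M, hM, hMij⟩ := hlink i j
  have : single i j c = c • (single i i 1 * M * single j j 1) := by
    rw [single_mul_mul_single, hMij, smul_single, one_mul, mul_one, smul_eq_mul, mul_one]
  rw [this]
  exact S.smul_mem (S.mul_mem (S.mul_mem (hdiag i) hM) (hdiag j)) c

theorem diagonal_mem_unitary_s13 [CommSemiring R] [StarRing R] {d : n → R}
    (hd : ∀ i, d i ∈ unitary R) : diagonal d ∈ unitary (Matrix n n R) := by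
  simp only [Unitary.mem_iff, star_eq_conjTranspose, diagonal_conjTranspose,
    diagonal_mul_diagonal, ← diagonal_one]
  exact ⟨congrArg diagonal (funext fun i => Unitary.star_mul_self_of_mem (hd i)),
    congrArg diagonal (funext fun i => Unitary.mul_star_self_of_mem (hd i))⟩

theorem permMatrix_mem_unitary_s13 [CommSemiring R] [StarRing R] (σ : Equiv.Perm n) :
    σ.permMatrix R ∈ unitary (Matrix n n R) := by
  simp only [Unitary.mem_iff, star_eq_conjTranspose, conjTranspose_permMatrix, ← permMatrix_mul,
    mul_inv_cancel, inv_mul_cancel, permMatrix_one, and_self]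

theorem permMatrix_mul_mul_star [CommSemiring R] [StarRing R] (σ : Equiv.Perm n)
    (M : Matrix n n R) : σ.permMatrix R * M * star (σ.permMatrix R) = M.submatrix σ σ := by
  rw [star_eq_conjTranspose, conjTranspose_permMatrix, PEquiv.toMatrix_toPEquiv_mul,
    PEquiv.mul_toMatrix_toPEquiv, submatrix_submatrix]
  rfl

theorem permMatrix_mem_unitaryNormalizer [CommSemiring R] [StarRing R]
    {B : Set (Matrix n n R)} (σ : Equiv.Perm n)
    (hB : ∀ M ∈ B, M.submatrix σ σ ∈ B)
    (hB' : ∀ M ∈ B, M.submatrix ⇑σ⁻¹ ⇑σ⁻¹ ∈ B) :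
    σ.permMatrix R ∈ unitaryNormalizer B := by
  refine mem_unitaryNormalizer_of_conj_mem (permMatrix_mem_unitary_s13 σ)
    (fun M hM => ?_) (fun M hM => ?_)
  · rw [permMatrix_mul_mul_star]
    exact hB M hM
  · have := permMatrix_mul_mul_star (R := R) σ⁻¹ M
    rw [star_eq_conjTranspose, conjTranspose_permMatrix, inv_inv] at this
    rw [star_eq_conjTranspose, conjTranspose_permMatrix, this]
    exact hB' M hM

theorem diagonal_indicator_mem_adjoin [Field R] [NeZero (2 : R)] {N : Set (Matrix n n R)}
    (P : n → Prop) [DecidablePred P]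
    (hP : diagonal (fun i => if P i then -1 else 1) ∈ N) :
    diagonal (fun i => if P i then 1 else 0) ∈ Algebra.adjoin R N := by
  have : diagonal (fun i => if P i then (1 : R) else 0) =
      (2 : R)⁻¹ • (1 - diagonal fun i => if P i then -1 else 1) := by
    rw [← diagonal_one, diagonal_sub, ← diagonal_smul]
    congr 1
    funext i
    rw [Pi.smul_apply, smul_eq_mul]
    by_cases h : P i
    · rw [if_pos h, if_pos h, sub_neg_eq_add, one_add_one_eq_two, inv_mul_cancel₀ two_ne_zero]
    · rw [if_neg h, if_neg h, sub_self, mul_zero]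
  rw [this]
  exact Subalgebra.smul_mem _ (sub_mem (one_mem _) (Algebra.subset_adjoin hP)) _

end Matrix

section Homogeneous

variable (R ι κ τ : Type*) [Fintype ι] [DecidableEq ι] [Fintype κ] [DecidableEq κ]
  [Fintype τ] [DecidableEq τ]

/-- `X ↦ ⊕ⱼ Xⱼ ⊗ 1_τ`, with rows and columns indexed by (block, index in block, copy). -/
def homogeneousEmbedding [CommSemiring R] [StarRing R] :
    (ι → Matrix κ κ R) →⋆ₐ[R] Matrix (ι × κ × τ) (ι × κ × τ) R where
  toFun X := of fun p q => if p.1 = q.1 ∧ p.2.2 = q.2.2 then X p.1 p.2.1 q.2.1 else 0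
  map_one' := by
    ext ⟨j, a, u⟩ ⟨k, b, v⟩
    simp only [of_apply, Pi.one_apply, one_apply, Prod.mk.injEq]
    grind
  map_mul' X Y := by
    ext ⟨j, a, u⟩ ⟨k, b, v⟩
    rcases eq_or_ne j k with rfl | hjk
    · simp [mul_apply, Fintype.sum_prod_type, ite_and, Finset.sum_ite_eq, eq_comm]
    · simp [mul_apply, Fintype.sum_prod_type, ite_and, hjk]
  map_zero' := by
    ext
    simp
  map_add' X Y := by
    ext
    simp only [of_apply, Pi.add_apply, Matrix.add_apply, ite_add_ite, add_zero]
  commutes' c := by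
    ext ⟨j, a, u⟩ ⟨k, b, v⟩
    simp only [of_apply, Pi.algebraMap_apply, algebraMap_eq_diagonal, diagonal_apply,
      Prod.mk.injEq]
    grind
  map_star' X := by
    ext ⟨j, a, u⟩ ⟨k, b, v⟩
    simp only [of_apply, Pi.star_apply, star_apply]
    split_ifs <;> grind [star_zero]

def homogeneousSubalgebra [CommSemiring R] [StarRing R] :
    StarSubalgebra R (Matrix (ι × κ × τ) (ι × κ × τ) R) :=
  (homogeneousEmbedding R ι κ τ).range

variable {R ι κ τ}

theorem homogeneousEmbedding_apply [CommSemiring R] [StarRing R] (X : ι → Matrix κ κ R)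
    (p q : ι × κ × τ) :
    homogeneousEmbedding R ι κ τ X p q =
      if p.1 = q.1 ∧ p.2.2 = q.2.2 then X p.1 p.2.1 q.2.1 else 0 :=
  rfl

theorem mem_homogeneousSubalgebra [CommSemiring R] [StarRing R]
    {Z : Matrix (ι × κ × τ) (ι × κ × τ) R} :
    Z ∈ homogeneousSubalgebra R ι κ τ ↔ ∃ X, homogeneousEmbedding R ι κ τ X = Z :=
  Iff.rfl

theorem mem_homogeneousSubalgebra_iff [CommSemiring R] [StarRing R]
    {Z : Matrix (ι × κ × τ) (ι × κ × τ) R} :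
    Z ∈ homogeneousSubalgebra R ι κ τ ↔ ∃ X : ι → Matrix κ κ R,
      ∀ (j : ι) (a : κ) (u : τ) (k : ι) (b : κ) (v : τ),
        Z (j, a, u) (k, b, v) = if j = k ∧ u = v then X j a b else 0 := by
  refine mem_homogeneousSubalgebra.trans <| exists_congr fun X => ⟨?_, fun h => ?_⟩
  · rintro rfl j a u k b v
    rfl
  · ext ⟨j, a, u⟩ ⟨k, b, v⟩
    exact (h j a u k b v).symm

theorem diagonal_mem_homogeneousSubalgebra [CommSemiring R] [StarRing R] (d : ι × κ → R) :
    diagonal (fun p : ι × κ × τ => d (p.1, p.2.1)) ∈ homogeneousSubalgebra R ι κ τ := by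
  refine mem_homogeneousSubalgebra.2 ⟨fun j => diagonal fun a => d (j, a), ?_⟩
  ext ⟨j, a, u⟩ ⟨k, b, v⟩
  simp only [homogeneousEmbedding_apply, diagonal_apply, Prod.mk.injEq]
  grind

theorem commute_diagonal_of_mem_homogeneousSubalgebra [CommSemiring R] [StarRing R] (e : τ → R)
    {Z : Matrix (ι × κ × τ) (ι × κ × τ) R} (hZ : Z ∈ homogeneousSubalgebra R ι κ τ) :
    Commute (diagonal fun p => e p.2.2) Z := by
  obtain ⟨X, rfl⟩ := mem_homogeneousSubalgebra.1 hZ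
  ext p q
  simp only [diagonal_mul, mul_diagonal, homogeneousEmbedding_apply]
  split_ifs with h
  · rw [h.2, mul_comm]
  · simp

theorem submatrix_prodCongr_mem_homogeneousSubalgebra [CommSemiring R] [StarRing R]
    (σ : Equiv.Perm ι) (π : Equiv.Perm κ) (ρ : Equiv.Perm τ)
    {Z : Matrix (ι × κ × τ) (ι × κ × τ) R} (hZ : Z ∈ homogeneousSubalgebra R ι κ τ) :
    Z.submatrix (σ.prodCongr (π.prodCongr ρ)) (σ.prodCongr (π.prodCongr ρ)) ∈
      homogeneousSubalgebra R ι κ τ := by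
  obtain ⟨X, rfl⟩ := mem_homogeneousSubalgebra.1 hZ
  refine mem_homogeneousSubalgebra.2 ⟨fun j => (X (σ j)).submatrix π π, ?_⟩
  ext p q
  simp [homogeneousEmbedding_apply]

theorem prodCongr_permMatrix_mem_unitaryNormalizer [CommSemiring R] [StarRing R]
    (σ : Equiv.Perm ι) (π : Equiv.Perm κ) (ρ : Equiv.Perm τ) :
    Equiv.Perm.permMatrix R (σ.prodCongr (π.prodCongr ρ)) ∈
      unitaryNormalizer (SetLike.coe (homogeneousSubalgebra R ι κ τ)) := by
  refine permMatrix_mem_unitaryNormalizer _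
    (fun _ => submatrix_prodCongr_mem_homogeneousSubalgebra σ π ρ) fun Z hZ => ?_
  simpa [Equiv.Perm.inv_def, Equiv.prodCongr_symm] using
    submatrix_prodCongr_mem_homogeneousSubalgebra σ⁻¹ π⁻¹ ρ⁻¹ hZ

theorem single_self_mem_adjoin_unitaryNormalizer [Field R] [StarRing R] [NeZero (2 : R)]
    (j : ι) (a : κ) (u : τ) :
    single (j, a, u) (j, a, u) (1 : R) ∈
      Algebra.adjoin R (SetLike.coe (unitaryNormalizer (SetLike.coe
        (homogeneousSubalgebra R ι κ τ)))) := by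
  have sign_mem_unitary (c : Prop) [Decidable c] : (if c then -1 else 1 : R) ∈ unitary R := by
    split_ifs <;> simp [Unitary.mem_iff]
  have h₁ :
      diagonal (fun p : ι × κ × τ => if (p.1, p.2.1) = (j, a) then (-1 : R) else 1) ∈
        unitaryNormalizer (SetLike.coe (homogeneousSubalgebra R ι κ τ)) :=
    StarSubalgebra.mem_unitaryNormalizer_of_mem (diagonal_mem_unitary_s13 fun _ => sign_mem_unitary _)
      (diagonal_mem_homogeneousSubalgebra fun x => if x = (j, a) then -1 else 1)
  have h₂ : diagonal (fun p : ι × κ × τ => if p.2.2 = u then (-1 : R) else 1) ∈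
      unitaryNormalizer (SetLike.coe (homogeneousSubalgebra R ι κ τ)) :=
    mem_unitaryNormalizer_of_commute (diagonal_mem_unitary_s13 fun _ => sign_mem_unitary _)
      fun _ => commute_diagonal_of_mem_homogeneousSubalgebra fun x => if x = u then -1 else 1
  have single_eq : single (j, a, u) (j, a, u) (1 : R) =
      diagonal (fun p : ι × κ × τ => if (p.1, p.2.1) = (j, a) then 1 else 0) *
        diagonal (fun p : ι × κ × τ => if p.2.2 = u then 1 else 0) := by
    rw [diagonal_mul_diagonal, ← diagonal_single]
    congr 1
    funext ⟨j', a', u'⟩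
    simp only [Pi.single_apply, Prod.mk.injEq, ite_zero_mul_ite_zero, mul_one]
    exact if_congr (by tauto) rfl rfl
  rw [single_eq]
  exact mul_mem (diagonal_indicator_mem_adjoin _ h₁) (diagonal_indicator_mem_adjoin _ h₂)

theorem span_unitaryNormalizer_homogeneousSubalgebra [Field R] [StarRing R] [NeZero (2 : R)] :
    Submodule.span R (SetLike.coe (unitaryNormalizer (SetLike.coe
      (homogeneousSubalgebra R ι κ τ)))) = ⊤ := by
  rw [Submonoid.span_eq_toSubmodule_adjoin, Algebra.toSubmodule_eq_top]
  refine subalgebra_eq_top_of_single_mem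
    (fun ⟨j, a, u⟩ => single_self_mem_adjoin_unitaryNormalizer j a u) fun ⟨j, a, u⟩ ⟨k, b, v⟩ => ?_
  exact ⟨_, Algebra.subset_adjoin <| prodCongr_permMatrix_mem_unitaryNormalizer
    (Equiv.swap j k) (Equiv.swap a b) (Equiv.swap u v), by simp [PEquiv.toMatrix_apply]⟩

end Homogeneous

theorem homogeneous_equal_multiplicities_regular_general (m r t : ℕ)
    (B : Set (Matrix (Fin r × Fin m × Fin t) (Fin r × Fin m × Fin t) ℂ))
    (hB : B = {Z | ∃ X : Fin r → Matrix (Fin m) (Fin m) ℂ,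
      ∀ (j : Fin r) (a : Fin m) (u : Fin t) (k : Fin r) (b : Fin m) (v : Fin t),
        Z (j, a, u) (k, b, v) = if j = k ∧ u = v then X j a b else 0}) :
    (1 : Matrix (Fin r × Fin m × Fin t) (Fin r × Fin m × Fin t) ℂ) ∈ B ∧
    (∀ x ∈ B, ∀ y ∈ B, x + y ∈ B) ∧
    (∀ x ∈ B, ∀ y ∈ B, x * y ∈ B) ∧
    (∀ (c : ℂ), ∀ x ∈ B, c • x ∈ B) ∧
    (∀ x ∈ B, xᴴ ∈ B) ∧
    Submodule.span ℂ
      {U : Matrix (Fin r × Fin m × Fin t) (Fin r × Fin m × Fin t) ℂ |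
        U ∈ unitary (Matrix (Fin r × Fin m × Fin t) (Fin r × Fin m × Fin t) ℂ) ∧
        (fun Z => U * Z * Uᴴ) '' B = B} = ⊤ := by
  obtain rfl : B = homogeneousSubalgebra ℂ (Fin r) (Fin m) (Fin t) :=
    hB.trans (Set.ext fun _ => mem_homogeneousSubalgebra_iff.symm)
  exact ⟨one_mem _, fun _ hx _ hy => add_mem hx hy, fun _ hx _ hy => mul_mem hx hy,
    fun c _ hx => SMulMemClass.smul_mem c hx, fun _ hx => star_mem hx,
    span_unitaryNormalizer_homogeneousSubalgebra⟩

/-- the homogeneous algebra `⊕_{j<r} M_m(ℂ)` embedded into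
`M_{mrt}(ℂ)` with all multiplicities equal to `t` is a unital star-subalgebra,
and the inclusion is regular. -/
theorem homogeneous_equal_multiplicities_regular (m r t : ℕ)
    (hm : 1 ≤ m) (hr : 1 ≤ r) (ht : 1 ≤ t)
    (B : Set (Matrix (Fin r × Fin m × Fin t) (Fin r × Fin m × Fin t) ℂ))
    (hB : B = {Z | ∃ X : Fin r → Matrix (Fin m) (Fin m) ℂ,
      ∀ (j : Fin r) (a : Fin m) (u : Fin t) (k : Fin r) (b : Fin m) (v : Fin t),
        Z (j, a, u) (k, b, v) = if j = k ∧ u = v then X j a b else 0}) :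
    (1 : Matrix (Fin r × Fin m × Fin t) (Fin r × Fin m × Fin t) ℂ) ∈ B ∧
    (∀ x ∈ B, ∀ y ∈ B, x + y ∈ B) ∧
    (∀ x ∈ B, ∀ y ∈ B, x * y ∈ B) ∧
    (∀ (c : ℂ), ∀ x ∈ B, c • x ∈ B) ∧
    (∀ x ∈ B, xᴴ ∈ B) ∧
    Submodule.span ℂ
      {U : Matrix (Fin r × Fin m × Fin t) (Fin r × Fin m × Fin t) ℂ |
        U ∈ unitary (Matrix (Fin r × Fin m × Fin t) (Fin r × Fin m × Fin t) ℂ) ∧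
        (fun Z => U * Z * Uᴴ) '' B = B} = ⊤ :=
  homogeneous_equal_multiplicities_regular_general m r t B hB
end
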